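/- (Congruences between p-adic Eisenstein series.) Let p be an odd prime, let a ≥ 1 be an integer, and let k₁ and k₂ be positive even integers with k₁ ≡ k₂ (mod (p−1)p^{a−1}) and with p−1 dividing neither k₁ nor k₂. Then the p-adic Eisenstein series G^{(p)}_{k₁}(z) = (1/2)ζ^{(p)}(1−k₁) + Σ_{n≥1} σ^{(p)}_{k₁−1}(n)q^n and G^{(p)}_{k₂}(z) are congruent coefficientwise modulo p^a: (i) the p-adic valuation of (1/2)ζ^{(p)}(1−k₁) − (1/2)ζ^{(p)}(1−k₂) is at least a, and (ii) for every positive integer n, σ^{(p)}_{k₁−1}(n) ≡ σ^{(p)}_{k₂−1}(n) (mod p^a). -/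

import Mathlib

/-!
Part (ii) is Euler's theorem applied to each divisor prime to `p`, as `φ(p^a) = (p-1)p^(a-1)`.

For part (i) fix `c` prime to `p`. For the reduced residues `j` modulo `p^N` write
`c j = q_j p^N + r_j`; as `j ↦ r_j` permutes them, expanding `(c j)^m` to first order in `p^N`
gives Voronoi's congruence `(c^m - 1) Σ_j j^m ≡ m p^N Σ_j q_j r_j^(m-1) (mod p^(2N))`.
Faulhaber's formula shows `p^(-N) Σ_j j^m → (1 - p^(m-1)) B_m` in `ℚ_p`, so the integers
`Φ_N(m) = Σ_j q_j r_j^(m-1)` tend to `(1 - c^m) ζ^(p)(1-m)`, and `Φ_N(k₁) ≡ Φ_N(k₂) (mod p^a)`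
by Euler's theorem again. Taking for `c` a primitive root modulo `p`, the factor `1 - c^k` is a
`p`-adic unit when `p - 1 ∤ k` and can be cancelled.
-/

open scoped Real BigOperators

/-- The constant term `ζ^(p)(1-k) = (1 - p^(k-1)) ζ(1-k) = -(1 - p^(k-1)) B_k / k` of
the `p`-adic Eisenstein series, as a rational number. -/
noncomputable def zetaP (p k : ℕ) : ℚ := -(1 - (p : ℚ) ^ (k - 1)) * bernoulli k / k

/-- The `p`-deprived divisor power sum `σ^(p)_m(n) = Σ_{d ∣ n, p ∤ d} d^m`. -/
def sigmaP (p m n : ℕ) : ℕ := ∑ d ∈ n.divisors.filter (fun d => ¬ p ∣ d), d ^ m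

open Finset Filter Topology

theorem pow_modEq_pow_of_modEq_totient {x e₁ e₂ n : ℕ} (hx : x.Coprime n)
    (h : e₁ ≡ e₂ [MOD n.totient]) : x ^ e₁ ≡ x ^ e₂ [MOD n] := by
  rw [← ZMod.natCast_eq_natCast_iff]
  simpa using congrArg ((↑) : (ZMod n)ˣ → ZMod n)
    (pow_eq_pow_of_modEq h (ZMod.pow_totient (ZMod.unitOfCoprime x hx)))

theorem pow_modEq_pow_of_not_dvd {p a x e₁ e₂ : ℕ} (hp : p.Prime) (ha : 1 ≤ a) (hx : ¬ p ∣ x)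
    (h : e₁ ≡ e₂ [MOD (p - 1) * p ^ (a - 1)]) : x ^ e₁ ≡ x ^ e₂ [MOD p ^ a] :=
  pow_modEq_pow_of_modEq_totient ((hp.coprime_iff_not_dvd.2 hx).symm.pow_right a)
    (by rwa [Nat.totient_prime_pow hp ha, mul_comm])

theorem sigmaP_modEq_of_modEq {p a m₁ m₂ : ℕ} (hp : p.Prime) (ha : 1 ≤ a)
    (h : m₁ ≡ m₂ [MOD (p - 1) * p ^ (a - 1)]) (n : ℕ) :
    sigmaP p m₁ n ≡ sigmaP p m₂ n [MOD p ^ a] :=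
  Nat.ModEq.sum fun _ hd => pow_modEq_pow_of_not_dvd hp ha (mem_filter.1 hd).2 h

def reducedResidues (p N : ℕ) : Finset ℕ := (range (p ^ N)).filter (fun j => ¬ p ∣ j)

section reducedResidues

variable {p N c : ℕ}

theorem mem_reducedResidues {j : ℕ} : j ∈ reducedResidues p N ↔ j < p ^ N ∧ ¬ p ∣ j := by
  simp [reducedResidues]

theorem mul_mod_mem_reducedResidues (hp : p.Prime) (hN : N ≠ 0) (hc : ¬ p ∣ c) {j : ℕ}
    (hj : j ∈ reducedResidues p N) : c * j % p ^ N ∈ reducedResidues p N := by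
  rw [mem_reducedResidues] at hj ⊢
  refine ⟨Nat.mod_lt _ (pow_pos hp.pos N), ?_⟩
  rw [Nat.dvd_mod_iff (dvd_pow_self p hN), hp.dvd_mul]
  exact not_or.2 ⟨hc, hj.2⟩

theorem mul_mod_mul_mod_of_mul_mod_eq_one {d d' : ℕ} (hd : d * d' % p ^ N = 1) {j : ℕ}
    (hj : j ∈ reducedResidues p N) : d' * (d * j % p ^ N) % p ^ N = j := by
  rw [Nat.mul_mod, Nat.mod_mod, ← Nat.mul_mod, ← mul_assoc, mul_comm d', Nat.mul_mod, hd,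
    one_mul, Nat.mod_mod, Nat.mod_eq_of_lt (mem_reducedResidues.1 hj).1]

theorem sum_reducedResidues_comp_mul_mod {M : Type*} [AddCommMonoid M] (hp : p.Prime)
    (hN : N ≠ 0) (hc : ¬ p ∣ c) (f : ℕ → M) :
    ∑ j ∈ reducedResidues p N, f (c * j % p ^ N) = ∑ j ∈ reducedResidues p N, f j := by
  obtain ⟨c', -, hcc'⟩ := Nat.exists_mul_mod_eq_one_of_coprime
    ((hp.coprime_iff_not_dvd.2 hc).symm.pow_right N) (Nat.one_lt_pow hN hp.one_lt)
  have hc' : ¬ p ∣ c' := fun h => hp.not_dvd_one <| by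
    simpa [hcc'] using (Nat.dvd_mod_iff (dvd_pow_self p hN)).2 (h.mul_left c)
  have hc'c : c' * c % p ^ N = 1 := by rwa [mul_comm]
  exact sum_nbij' (c * · % p ^ N) (c' * · % p ^ N)
    (fun _ => mul_mod_mem_reducedResidues hp hN hc) (fun _ => mul_mod_mem_reducedResidues hp hN hc')
    (fun _ => mul_mod_mul_mod_of_mul_mod_eq_one hcc')
    (fun _ => mul_mod_mul_mod_of_mul_mod_eq_one hc'c) (fun _ _ => rfl)

theorem sum_reducedResidues_add_sum_range_mul {M : Type*} [AddCommMonoid M]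
    (hp : p.Prime) (N : ℕ) (f : ℕ → M) :
    ∑ j ∈ reducedResidues p (N + 1), f j + ∑ i ∈ range (p ^ N), f (p * i) =
      ∑ j ∈ range (p ^ (N + 1)), f j := by
  rw [← sum_filter_not_add_sum_filter (range (p ^ (N + 1))) (p ∣ ·) f, reducedResidues]
  congr 1
  refine sum_nbij' (p * ·) (· / p) (fun i hi => ?_) (fun j hj => ?_)
    (fun i _ => Nat.mul_div_cancel_left i hp.pos)
    (fun j hj => Nat.mul_div_cancel' (mem_filter.1 hj).2) (fun _ _ => rfl)
  · rw [mem_range] at hi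
    rw [mem_filter, mem_range, pow_succ']
    exact ⟨Nat.mul_lt_mul_left hp.pos |>.2 hi, dvd_mul_right _ _⟩
  · rw [mem_filter, mem_range, pow_succ'] at hj
    rw [mem_range]
    exact Nat.div_lt_of_lt_mul hj.1

end reducedResidues

theorem add_mul_pow_modEq (x y q : ℤ) (m : ℕ) :
    (y + q * x) ^ m ≡ y ^ m + m * q * x * y ^ (m - 1) [ZMOD q ^ 2] := by
  obtain ⟨k, hk⟩ := Polynomial.binomExpansion (Polynomial.X ^ m) y (q * x)
  simp only [Polynomial.eval_pow, Polynomial.eval_X, Polynomial.derivative_X_pow,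
    Polynomial.eval_mul, Polynomial.eval_C] at hk
  rw [hk, Int.modEq_iff_dvd]
  exact ⟨-(k * x ^ 2), by ring⟩

def voronoiSum (p c N m : ℕ) : ℕ :=
  ∑ j ∈ reducedResidues p N, (c * j / p ^ N) * (c * j % p ^ N) ^ (m - 1)

theorem voronoi_congruence {p c N : ℕ} (hp : p.Prime) (hN : N ≠ 0) (hc : ¬ p ∣ c) (m : ℕ) :
    ((c : ℤ) ^ m - 1) * ∑ j ∈ reducedResidues p N, (j : ℤ) ^ m ≡
      m * p ^ N * voronoiSum p c N m [ZMOD (p ^ N) ^ 2] := by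
  have hdiv (j : ℕ) : ((c * j % p ^ N : ℕ) : ℤ) + p ^ N * (c * j / p ^ N : ℕ) = c * j := by
    exact_mod_cast Nat.mod_add_div (c * j) (p ^ N)
  have hexpand := Int.ModEq.sum (s := reducedResidues p N) fun j _ =>
    add_mul_pow_modEq ((c * j / p ^ N : ℕ) : ℤ) ((c * j % p ^ N : ℕ) : ℤ) (p ^ N) m
  simp only [hdiv, sum_add_distrib, mul_pow] at hexpand
  rw [← mul_sum, sum_reducedResidues_comp_mul_mod hp hN hc (fun r => (r : ℤ) ^ m)] at hexpand
  have hΦ : ∑ j ∈ reducedResidues p N, (m : ℤ) * p ^ N * (c * j / p ^ N : ℕ)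
      * (c * j % p ^ N : ℕ) ^ (m - 1) = m * p ^ N * voronoiSum p c N m := by
    simp only [voronoiSum, Nat.cast_sum, Nat.cast_mul, Nat.cast_pow, mul_sum, mul_assoc]
  rw [hΦ] at hexpand
  simpa [sub_mul] using hexpand.sub_right (∑ j ∈ reducedResidues p N, (j : ℤ) ^ m)

theorem voronoiSum_modEq_of_modEq {p c N a m₁ m₂ : ℕ} (hp : p.Prime) (hN : N ≠ 0) (ha : 1 ≤ a)
    (hc : ¬ p ∣ c) (h : m₁ - 1 ≡ m₂ - 1 [MOD (p - 1) * p ^ (a - 1)]) :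
    voronoiSum p c N m₁ ≡ voronoiSum p c N m₂ [MOD p ^ a] :=
  Nat.ModEq.sum fun _ hj => Nat.ModEq.mul_left _ <| pow_modEq_pow_of_not_dvd hp ha
    (mem_reducedResidues.1 (mul_mod_mem_reducedResidues hp hN hc hj)).2 h

noncomputable def faulhaberQuotient (K : Type*) [Field K] (m : ℕ) (x : K) : K :=
  ∑ i ∈ range (m + 1), ((bernoulli i * (m + 1).choose i / (m + 1) : ℚ) : K) * x ^ (m - i)

theorem sum_range_pow_eq_mul_faulhaberQuotient (K : Type*) [Field K] [CharZero K] (n m : ℕ) :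
    ∑ j ∈ range n, (j : K) ^ m = n * faulhaberQuotient K m n := by
  have h := congrArg (Rat.cast : ℚ → K) (sum_range_pow n m)
  push_cast at h
  rw [h, faulhaberQuotient, mul_sum]
  refine sum_congr rfl fun i hi => ?_
  rw [Nat.sub_add_comm (mem_range_succ_iff.1 hi), pow_succ]
  push_cast
  ring

theorem continuous_faulhaberQuotient (K : Type*) [NormedField K] (m : ℕ) :
    Continuous (faulhaberQuotient K m) := by
  unfold faulhaberQuotient
  fun_prop

theorem faulhaberQuotient_zero (K : Type*) [Field K] [CharZero K] (m : ℕ) :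
    faulhaberQuotient K m 0 = bernoulli m := by
  rw [faulhaberQuotient, sum_range_succ, sum_eq_zero fun i hi => by
    rw [zero_pow (Nat.sub_ne_zero_of_lt (mem_range.1 hi)), mul_zero]]
  have : ((m : ℚ) + 1) ≠ 0 := by positivity
  simp [Nat.choose_succ_self_right, this]

namespace Padic

variable {p : ℕ} [Fact p.Prime]

theorem norm_intCast_sub_le_of_modEq {n x y : ℤ} (h : x ≡ y [ZMOD n]) :
    ‖(x : ℚ_[p]) - y‖ ≤ ‖(n : ℚ_[p])‖ := by
  obtain ⟨t, ht⟩ := h.dvd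
  rw [norm_sub_rev, ← Int.cast_sub, ht, Int.cast_mul, norm_mul]
  exact mul_le_of_le_one_right (norm_nonneg _) (norm_int_le_one t)

theorem norm_natCast_sub_le_of_modEq {n x y : ℕ} (h : x ≡ y [MOD n]) :
    ‖(x : ℚ_[p]) - y‖ ≤ ‖(n : ℚ_[p])‖ := by
  exact_mod_cast norm_intCast_sub_le_of_modEq (p := p) (Int.natCast_modEq_iff.2 h)

theorem tendsto_pow_p_atTop_nhds_zero : Tendsto (fun N : ℕ => (p : ℚ_[p]) ^ N) atTop (𝓝 0) :=
  tendsto_pow_atTop_nhds_zero_of_norm_lt_one norm_p_lt_one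

end Padic

theorem exists_norm_one_sub_pow_eq_one (p : ℕ) [Fact p.Prime] :
    ∃ c : ℕ, ¬ p ∣ c ∧ ∀ k, ¬ (p - 1) ∣ k → ‖1 - (c : ℚ_[p]) ^ k‖ = 1 := by
  obtain ⟨g, hg⟩ := IsCyclic.exists_generator (α := (ZMod p)ˣ)
  have horder : orderOf g = p - 1 := by
    rw [orderOf_eq_card_of_forall_mem_zpowers hg, Nat.card_eq_fintype_card, ZMod.card_units]
  refine ⟨(g : ZMod p).val, fun h => g.ne_zero ?_, fun k hk => ?_⟩
  · rwa [← ZMod.natCast_eq_zero_iff, ZMod.natCast_zmod_val] at h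
  · have hlt : ¬ ‖(((1 - (g : ZMod p).val ^ k : ℤ)) : ℚ_[p])‖ < 1 := by
      rw [Padic.norm_intCast_lt_one_iff, ← ZMod.intCast_zmod_eq_zero_iff_dvd]
      push_cast
      rw [ZMod.natCast_zmod_val, sub_eq_zero, eq_comm, ← Units.val_pow_eq_pow_val,
        Units.val_eq_one, ← orderOf_dvd_iff_pow_eq_one, horder]
      exact hk
    push_cast at hlt
    exact le_antisymm (by exact_mod_cast Padic.norm_int_le_one (1 - (g : ZMod p).val ^ k : ℤ))
      (not_lt.1 hlt)

theorem norm_sub_le_of_norm_mul_sub_mul_le {K : Type*} [NormedField K] [IsUltrametricDist K]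
    {u₁ u₂ w₁ w₂ : K} {ε : ℝ} (hu₁ : ‖u₁‖ = 1) (hw₂ : ‖w₂‖ ≤ 1) (hu : ‖u₁ - u₂‖ ≤ ε)
    (h : ‖u₁ * w₁ - u₂ * w₂‖ ≤ ε) : ‖w₁ - w₂‖ ≤ ε := by
  have hε : ‖(u₁ - u₂) * w₂‖ ≤ ε := by
    rw [norm_mul]; exact (mul_le_of_le_one_right (norm_nonneg _) hw₂).trans hu
  calc ‖w₁ - w₂‖ = ‖(u₁ * w₁ - u₂ * w₂) + -((u₁ - u₂) * w₂)‖ := by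
        rw [← one_mul ‖w₁ - w₂‖, ← hu₁, ← norm_mul]; congr 1; ring
    _ ≤ ε := (IsUltrametricDist.norm_add_le_max _ _).trans (max_le h (by rwa [norm_neg]))

section Limits

variable {p : ℕ} [Fact p.Prime]

theorem tendsto_sum_reducedResidues_pow_div {m : ℕ} (hm : m ≠ 0) :
    Tendsto (fun N => (∑ j ∈ reducedResidues p (N + 1), (j : ℚ_[p]) ^ m) / (p : ℚ_[p]) ^ (N + 1))
      atTop (𝓝 ((1 - (p : ℚ_[p]) ^ (m - 1)) * bernoulli m)) := by
  have hp : p.Prime := Fact.out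
  have hp0 : (p : ℚ_[p]) ≠ 0 := Nat.cast_ne_zero.2 hp.ne_zero
  have hsplit (N : ℕ) : (∑ j ∈ reducedResidues p (N + 1), (j : ℚ_[p]) ^ m) / (p : ℚ_[p]) ^ (N + 1) =
      faulhaberQuotient ℚ_[p] m (p ^ (N + 1)) -
        p ^ (m - 1) * faulhaberQuotient ℚ_[p] m (p ^ N) := by
    have h := sum_reducedResidues_add_sum_range_mul hp N (fun j => (j : ℚ_[p]) ^ m)
    simp only [Nat.cast_mul, mul_pow, ← mul_sum, sum_range_pow_eq_mul_faulhaberQuotient,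
      Nat.cast_pow] at h
    rw [div_eq_iff (pow_ne_zero _ hp0), eq_sub_of_add_eq h]
    obtain ⟨m, rfl⟩ := Nat.exists_eq_succ_of_ne_zero hm
    simp only [Nat.succ_sub_one, pow_succ]
    ring
  have hF := (continuous_faulhaberQuotient ℚ_[p] m).tendsto 0
  rw [faulhaberQuotient_zero] at hF
  simp_rw [hsplit]
  have h1 := hF.comp ((Padic.tendsto_pow_p_atTop_nhds_zero (p := p)).comp (tendsto_add_atTop_nat 1))
  have h2 := hF.comp (Padic.tendsto_pow_p_atTop_nhds_zero (p := p))
  rw [sub_mul, one_mul]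
  exact h1.sub (h2.const_mul _)

theorem tendsto_voronoiSum {c m : ℕ} (hc : ¬ p ∣ c) (hm : m ≠ 0) :
    Tendsto (fun N => (voronoiSum p c (N + 1) m : ℚ_[p])) atTop
      (𝓝 ((1 - (c : ℚ_[p]) ^ m) * zetaP p m)) := by
  set S := fun N => (∑ j ∈ reducedResidues p (N + 1), (j : ℚ_[p]) ^ m) / (p : ℚ_[p]) ^ (N + 1)
  have hp : p.Prime := Fact.out
  have hp0 : (p : ℚ_[p]) ≠ 0 := Nat.cast_ne_zero.2 hp.ne_zero
  have herr (N : ℕ) : ‖((c : ℚ_[p]) ^ m - 1) * S N - m * voronoiSum p c (N + 1) m‖ ≤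
      ‖(p : ℚ_[p]) ^ (N + 1)‖ := by
    have h := Padic.norm_intCast_sub_le_of_modEq (p := p)
      (voronoi_congruence hp N.add_one_ne_zero hc m)
    push_cast at h
    have hq := pow_ne_zero (N + 1) hp0
    have hmul : (((c : ℚ_[p]) ^ m - 1) * S N - m * voronoiSum p c (N + 1) m) * p ^ (N + 1) =
        ((c : ℚ_[p]) ^ m - 1) * ∑ j ∈ reducedResidues p (N + 1), (j : ℚ_[p]) ^ m -
          m * p ^ (N + 1) * voronoiSum p c (N + 1) m := by
      simp only [S]
      field_simp
    rw [← mul_le_mul_iff_of_pos_right (norm_pos_iff.2 hq), ← norm_mul, hmul, ← sq, ← norm_pow]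
    exact h
  have herr' : Tendsto (fun N => ((c : ℚ_[p]) ^ m - 1) * S N - m * voronoiSum p c (N + 1) m)
      atTop (𝓝 0) :=
    squeeze_zero_norm herr (tendsto_norm_zero.comp
      ((Padic.tendsto_pow_p_atTop_nhds_zero (p := p)).comp (tendsto_add_atTop_nat 1)))
  have hm0 : (m : ℚ_[p]) ≠ 0 := Nat.cast_ne_zero.2 hm
  convert (((tendsto_sum_reducedResidues_pow_div hm).const_mul ((c : ℚ_[p]) ^ m - 1)).sub
    herr').div_const (m : ℚ_[p]) using 2
  · rw [sub_sub_cancel, mul_div_cancel_left₀ _ hm0]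
  · simp only [zetaP, sub_zero]
    push_cast
    field_simp
    ring

end Limits

theorem norm_zetaP_sub_zetaP_le {p a k₁ k₂ : ℕ} [Fact p.Prime] (ha : 1 ≤ a) (hk₁ : 0 < k₁)
    (hk₂ : 0 < k₂) (hcong : k₁ ≡ k₂ [MOD (p - 1) * p ^ (a - 1)]) (hnd₁ : ¬ (p - 1) ∣ k₁)
    (hnd₂ : ¬ (p - 1) ∣ k₂) :
    ‖(zetaP p k₁ : ℚ_[p]) - zetaP p k₂‖ ≤ ‖(p : ℚ_[p]) ^ a‖ := by
  have hp : p.Prime := Fact.out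
  obtain ⟨c, hc, hunit⟩ := exists_norm_one_sub_pow_eq_one p
  have hlim₂ := tendsto_voronoiSum hc hk₂.ne'
  have hE : ‖(1 - (c : ℚ_[p]) ^ k₁) * zetaP p k₁ - (1 - (c : ℚ_[p]) ^ k₂) * zetaP p k₂‖ ≤
      ‖(p : ℚ_[p]) ^ a‖ :=
    le_of_tendsto' ((tendsto_voronoiSum hc hk₁.ne').sub hlim₂).norm fun N => by
      exact_mod_cast Padic.norm_natCast_sub_le_of_modEq
        (voronoiSum_modEq_of_modEq hp N.add_one_ne_zero ha hc (hcong.sub_right hk₁ hk₂))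
  have hE₂ : ‖(1 - (c : ℚ_[p]) ^ k₂) * zetaP p k₂‖ ≤ 1 :=
    le_of_tendsto' hlim₂.norm fun N => by
      simpa using Padic.norm_int_le_one (p := p) (voronoiSum p c (N + 1) k₂)
  have hu : ‖(1 - (c : ℚ_[p]) ^ k₁) - (1 - (c : ℚ_[p]) ^ k₂)‖ ≤ ‖(p : ℚ_[p]) ^ a‖ := by
    rw [sub_sub_sub_cancel_left]
    exact_mod_cast Padic.norm_natCast_sub_le_of_modEq (pow_modEq_pow_of_not_dvd hp ha hc hcong).symm
  refine norm_sub_le_of_norm_mul_sub_mul_le (hunit k₁ hnd₁) ?_ hu hE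
  rwa [norm_mul, hunit k₂ hnd₂, one_mul] at hE₂

theorem padic_eisenstein_congruences_general (p : ℕ) (hp : p.Prime) (hodd : Odd p)
    (a : ℕ) (ha : 1 ≤ a) (k₁ k₂ : ℕ) (hk₁ : 0 < k₁) (hk₂ : 0 < k₂)
    (hcong : k₁ ≡ k₂ [MOD (p - 1) * p ^ (a - 1)])
    (hnd₁ : ¬ (p - 1) ∣ k₁) (hnd₂ : ¬ (p - 1) ∣ k₂) :
    padicNorm p ((1 / 2) * zetaP p k₁ - (1 / 2) * zetaP p k₂) ≤ (p : ℚ) ^ (-(a : ℤ)) ∧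
    ∀ n : ℕ, 0 < n → sigmaP p (k₁ - 1) n ≡ sigmaP p (k₂ - 1) n [MOD p ^ a] := by
  have : Fact p.Prime := ⟨hp⟩
  refine ⟨?_, fun n _ => sigmaP_modEq_of_modEq hp ha (hcong.sub_right hk₁ hk₂) n⟩
  have hnorm2 : padicNorm p 2 = 1 := by
    refine (padicNorm.nat_eq_one_iff 2).2 fun h => ?_
    obtain rfl := (Nat.prime_dvd_prime_iff_eq hp Nat.prime_two).1 h
    exact absurd hodd (by decide)
  have hζ := norm_zetaP_sub_zetaP_le ha hk₁ hk₂ hcong hnd₁ hnd₂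
  rw [← Rat.cast_sub, Padic.eq_padicNorm, Padic.norm_p_pow, ← Rat.cast_natCast, ← Rat.cast_zpow,
    Rat.cast_le] at hζ
  rwa [← mul_sub, padicNorm.mul, padicNorm.div, padicNorm.one, hnorm2, div_one, one_mul]

/-- congruences between `p`-adic Eisenstein series: if
`k₁ ≡ k₂ (mod (p-1)p^(a-1))` are positive even integers not divisible by `p - 1`, then
the `p`-adic Eisenstein series `G^(p)_{k₁}` and `G^(p)_{k₂}` are congruent
coefficientwise mod `p^a`: (i) `v_p((1/2)ζ^(p)(1-k₁) - (1/2)ζ^(p)(1-k₂)) ≥ a`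
(stated via the `p`-adic norm), and (ii) `σ^(p)_{k₁-1}(n) ≡ σ^(p)_{k₂-1}(n) (mod p^a)`
for all `n ≥ 1`. -/
theorem padic_eisenstein_congruences (p : ℕ) (hp : p.Prime) (hodd : Odd p)
    (a : ℕ) (ha : 1 ≤ a) (k₁ k₂ : ℕ) (hk₁ : 0 < k₁) (hk₂ : 0 < k₂)
    (he₁ : Even k₁) (he₂ : Even k₂)
    (hcong : k₁ ≡ k₂ [MOD (p - 1) * p ^ (a - 1)])
    (hnd₁ : ¬ (p - 1) ∣ k₁) (hnd₂ : ¬ (p - 1) ∣ k₂) :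
    padicNorm p ((1 / 2) * zetaP p k₁ - (1 / 2) * zetaP p k₂) ≤ (p : ℚ) ^ (-(a : ℤ)) ∧
    ∀ n : ℕ, 0 < n → sigmaP p (k₁ - 1) n ≡ sigmaP p (k₂ - 1) n [MOD p ^ a] :=
  padic_eisenstein_congruences_general p hp hodd a ha k₁ k₂ hk₁ hk₂ hcong hnd₁ hnd₂
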